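/- Elias-Bassalygo-type bound relating constant-weight and multiply constant-weight codes: A(mn, d, mw) <= ( binom(mn, mw) / binom(n, w)^m ) * M(m, n, d, w). -/

import Mathlib

/-! The symmetric group on coordinates acts transitively on the words of weight `mw`, so for an
optimal constant-weight code `C` and the set `T` of words of weight `w` on every block, the
average of `#{c ∈ C | π • c ∈ T}` over permutations `π` is `#C * #T / binom(mn, mw)`. Some
permutation attains at least the average, and since permuting coordinates preserves distances,
the selected codewords, moved into `T` and cut into blocks, form a multiply constant-weight code
with minimum distance `d`. -/

open Finset

/-- Hamming weight of a binary word. -/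
def wt {n : ℕ} (x : Fin n → Bool) : ℕ := (Finset.univ.filter fun i => x i = true).card

/-- `A n d w`: max size of a binary constant-weight code of length `n`, distance `d`, weight `w`. -/
noncomputable def A (n d w : ℕ) : ℕ :=
  sSup {s | ∃ C : Finset (Fin n → Bool), C.card = s ∧
    (∀ x ∈ C, wt x = w) ∧ ∀ x ∈ C, ∀ y ∈ C, x ≠ y → d ≤ hammingDist x y}

/-- `Aq q m d`: max size of a `q`-ary code of length `m` with minimum distance `d`. -/
noncomputable def Aq (q m d : ℕ) : ℕ :=
  sSup {s | ∃ C : Finset (Fin m → Fin q), C.card = s ∧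
    ∀ x ∈ C, ∀ y ∈ C, x ≠ y → d ≤ hammingDist x y}

/-- `M m n d w`: max size of a multiply constant-weight code: `m × n` binary matrices with
constant row weight `w` and pairwise (flattened) Hamming distance at least `d`. -/
noncomputable def M (m n d w : ℕ) : ℕ :=
  sSup {s | ∃ C : Finset (Fin m → Fin n → Bool), C.card = s ∧
    (∀ x ∈ C, ∀ i, wt (x i) = w) ∧
    ∀ x ∈ C, ∀ y ∈ C, x ≠ y → d ≤ ∑ i, hammingDist (x i) (y i)}

namespace MulAction

variable {G α : Type*} [Group G] [Fintype G] [MulAction G α] [DecidableEq α]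

theorem ncard_orbit_mul_card_filter_smul_eq {a b : α} (hb : b ∈ orbit G a) :
    (orbit G a).ncard * #{g : G | g • a = b} = Fintype.card G := by
  obtain ⟨g₀, rfl⟩ := hb
  have hfiber : #{g : G | g • a = g₀ • a} = Nat.card (stabilizer G a) := by
    rw [Nat.card_eq_fintype_card, ← Fintype.card_subtype]
    refine Fintype.card_congr ((Equiv.mulLeft g₀⁻¹).subtypeEquiv fun g => ?_)
    simp [mul_smul, inv_smul_eq_iff]
  rw [hfiber, ← index_stabilizer, mul_comm, Subgroup.card_mul_index, Nat.card_eq_fintype_card]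

theorem exists_card_mul_card_le_card_filter_smul_mem {O : Set α} {C T : Finset α}
    (hC : ∀ c ∈ C, orbit G c = O) (hT : ∀ y ∈ T, y ∈ O) :
    ∃ g : G, #C * #T ≤ O.ncard * #{c ∈ C | g • c ∈ T} := by
  have hfiber (c) (hc : c ∈ C) : O.ncard * #{g : G | g • c ∈ T} = #T * Fintype.card G := by
    rw [card_eq_sum_card_fiberwise (s := {g : G | g • c ∈ T}) (f := (· • c)) (t := T)
      fun g hg => (mem_filter.1 hg).2, mul_sum, sum_congr rfl fun y hy => ?_, sum_const,
      smul_eq_mul]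
    rw [filter_filter, ← hC c hc, ← ncard_orbit_mul_card_filter_smul_eq (hC c hc ▸ hT y hy)]
    congr 2
    exact filter_congr fun g _ => ⟨And.right, fun h => ⟨h ▸ hy, h⟩⟩
  have hcount : ∑ _g : G, #C * #T = ∑ g : G, O.ncard * #{c ∈ C | g • c ∈ T} :=
    calc ∑ _g : G, #C * #T = ∑ c ∈ C, #T * Fintype.card G := by
          simp only [sum_const, card_univ, smul_eq_mul]; ring
      _ = ∑ c ∈ C, O.ncard * #{g : G | g • c ∈ T} := (sum_congr rfl hfiber).symm
      _ = ∑ g : G, O.ncard * #{c ∈ C | g • c ∈ T} := by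
          simp only [← mul_sum, card_filter]; rw [sum_comm]
  obtain ⟨g, -, hg⟩ := exists_le_of_sum_le univ_nonempty hcount.le
  exact ⟨g, hg⟩

end MulAction

-- Permutations act on words by moving coordinates: `(π • x) i = x (π⁻¹ i)`.
attribute [local instance] arrowAction

open Equiv MulAction

theorem card_filter_perm_inv_apply {ι : Type*} [Fintype ι] (π : Perm ι) (p : ι → Prop)
    [DecidablePred p] : #{i | p (π⁻¹ i)} = #{i | p i} := by
  simp only [card_filter]
  exact Equiv.sum_comp π⁻¹ fun i => if p i then 1 else 0

theorem wt_perm_smul {N : ℕ} (π : Perm (Fin N)) (x : Fin N → Bool) : wt (π • x) = wt x :=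
  card_filter_perm_inv_apply π (x · = true)

theorem hammingDist_perm_smul {ι β : Type*} [Fintype ι] [DecidableEq β] (π : Perm ι)
    (x y : ι → β) : hammingDist (π • x) (π • y) = hammingDist x y :=
  card_filter_perm_inv_apply π fun i => x i ≠ y i

theorem card_filter_wt_eq (N W : ℕ) : #{x : Fin N → Bool | wt x = W} = N.choose W := by
  rw [← card_fin N, ← card_powersetCard W univ, card_fin]
  refine card_nbij' (fun x => ({i | x i = true} : Finset _)) (fun s i => decide (i ∈ s))
    ?_ ?_ ?_ ?_ <;> intro x <;> simp only [SetLike.mem_coe, mem_filter, mem_powersetCard] <;>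
    simp [wt]

theorem ncard_setOf_wt_eq (N W : ℕ) : {x : Fin N → Bool | wt x = W}.ncard = N.choose W := by
  rw [← card_filter_wt_eq, ← Set.ncard_coe_finset, coe_filter]
  simp

theorem orbit_perm_eq_setOf_wt {N : ℕ} (x : Fin N → Bool) :
    orbit (Perm (Fin N)) x = {y | wt y = wt x} := by
  ext y
  refine ⟨fun ⟨π, hπ⟩ => hπ ▸ wt_perm_smul π x, fun hy => ?_⟩
  obtain ⟨π, hπ⟩ := Set.powersetCard.isPretransitive.exists_smul_eq
    (⟨({i | x i = true} : Finset _), Set.powersetCard.mem_iff.2 rfl⟩ :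
      Set.powersetCard (Fin N) (wt x))
    ⟨({i | y i = true} : Finset _), Set.powersetCard.mem_iff.2 hy⟩
  refine ⟨π, funext fun i => ?_⟩
  have := congrArg (i ∈ ·.val) hπ
  simp only [Set.powersetCard.coe_smul, mem_smul_finset, mem_filter, mem_univ, true_and,
    Perm.smul_def, ← Equiv.eq_symm_apply, exists_eq_right] at this
  exact Bool.eq_iff_iff.2 (Iff.of_eq this)

-- Block `i` of a word of length `m * n` consists of the coordinates `n * i + j`, `j < n`.
def blocks (m n : ℕ) (β : Type*) : (Fin (m * n) → β) ≃ (Fin m → Fin n → β) :=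
  (finProdFinEquiv.arrowCongr (Equiv.refl β)).symm.trans (Equiv.curry _ _ _)

theorem card_filter_eq_sum_blocks {m n : ℕ} (p : Fin (m * n) → Prop) [DecidablePred p] :
    #{k | p k} = ∑ i, #{j | p (finProdFinEquiv (i, j))} := by
  simp only [card_filter]
  rw [← finProdFinEquiv.sum_comp, Fintype.sum_prod_type]

theorem wt_eq_sum_blocks {m n : ℕ} (x : Fin (m * n) → Bool) :
    wt x = ∑ i, wt (blocks m n Bool x i) :=
  card_filter_eq_sum_blocks (x · = true)

theorem hammingDist_eq_sum_blocks {m n : ℕ} {β : Type*} [DecidableEq β]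
    (x y : Fin (m * n) → β) :
    hammingDist x y = ∑ i, hammingDist (blocks m n β x i) (blocks m n β y i) :=
  card_filter_eq_sum_blocks fun k => x k ≠ y k

theorem card_filter_wt_blocks_eq (m n w : ℕ) :
    #{x : Fin (m * n) → Bool | ∀ i, wt (blocks m n Bool x i) = w} = n.choose w ^ m := by
  rw [← Fintype.card_subtype, Fintype.card_congr (((blocks m n Bool).subtypeEquiv
    (q := fun Y => ∀ i, wt (Y i) = w) fun _ => Iff.rfl).trans
    (Equiv.subtypePiEquivPi (p := fun _ r => wt r = w))),
    Fintype.card_pi]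
  simp [Fintype.card_subtype, card_filter_wt_eq]

theorem bddAbove_setOf_card {X : Type*} [Fintype X] (P : Finset X → Prop) :
    BddAbove {s | ∃ C : Finset X, #C = s ∧ P C} := by
  refine ⟨Fintype.card X, ?_⟩
  rintro _ ⟨C, rfl, -⟩
  exact card_le_univ C

theorem exists_code_card_eq_A (N d W : ℕ) :
    ∃ C : Finset (Fin N → Bool), #C = A N d W ∧ (∀ x ∈ C, wt x = W) ∧
      ∀ x ∈ C, ∀ y ∈ C, x ≠ y → d ≤ hammingDist x y :=
  Nat.sSup_mem (s := {s | ∃ C : Finset (Fin N → Bool), #C = s ∧ _}) ⟨0, ∅, by simp⟩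
    (bddAbove_setOf_card _)

theorem card_le_M {m n d w : ℕ} {D : Finset (Fin m → Fin n → Bool)}
    (hwt : ∀ x ∈ D, ∀ i, wt (x i) = w)
    (hdist : ∀ x ∈ D, ∀ y ∈ D, x ≠ y → d ≤ ∑ i, hammingDist (x i) (y i)) :
    #D ≤ M m n d w :=
  le_csSup (bddAbove_setOf_card _) ⟨D, rfl, hwt, hdist⟩

theorem A_mul_choose_pow_le_choose_mul_M (m n d w : ℕ) :
    A (m * n) d (m * w) * n.choose w ^ m ≤ (m * n).choose (m * w) * M m n d w := by
  obtain ⟨C, hCcard, hCwt, hCdist⟩ := exists_code_card_eq_A (m * n) d (m * w)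
  set T : Finset (Fin (m * n) → Bool) := {x | ∀ i, wt (blocks m n Bool x i) = w}
  have hTwt (y) (hy : y ∈ T) : wt y = m * w := by
    simp only [T, mem_filter, mem_univ, true_and] at hy
    simp [wt_eq_sum_blocks, hy]
  obtain ⟨π, hπ⟩ := exists_card_mul_card_le_card_filter_smul_mem (G := Perm (Fin (m * n)))
    (O := {y | wt y = m * w}) (fun c hc => by rw [orbit_perm_eq_setOf_wt, hCwt c hc]) hTwt
  rw [hCcard, card_filter_wt_blocks_eq, ncard_setOf_wt_eq] at hπ
  refine hπ.trans (Nat.mul_le_mul_left _ ?_)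
  rw [← card_image_of_injective _ ((blocks m n Bool).injective.comp (MulAction.injective π))]
  apply card_le_M
  · simp only [mem_image, mem_filter]
    rintro _ ⟨c, ⟨-, hc⟩, rfl⟩
    simpa [T] using hc
  · simp only [mem_image, mem_filter, Function.comp_apply]
    rintro _ ⟨c, ⟨hc, -⟩, rfl⟩ _ ⟨c', ⟨hc', -⟩, rfl⟩ hne
    rw [← hammingDist_eq_sum_blocks, hammingDist_perm_smul]
    exact hCdist c hc c' hc' fun h => hne (h ▸ rfl)

/-- Elias–Bassalygo-type bound:
`A(mn, d, mw) ≤ (C(mn,mw)/C(n,w)^m) · M(m,n,d,w)`. -/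
theorem stmt17 (m n d w : ℕ) (hw : w ≤ n) :
    (A (m * n) d (m * w) : ℚ) ≤
      ((m * n).choose (m * w) : ℚ) / ((n.choose w : ℚ)) ^ m * (M m n d w : ℚ) := by
  have hpos : (0 : ℚ) < (n.choose w : ℚ) ^ m := pow_pos (by exact_mod_cast Nat.choose_pos hw) m
  rw [div_mul_eq_mul_div, le_div_iff₀ hpos]
  exact_mod_cast A_mul_choose_pow_le_choose_mul_M m n d w
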